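/- Let J be a nonempty finite index set, J' ⊆ J, and let (I_j)_{j∈J} be i.i.d. Bernoulli(p) random variables with p ∈ (0,1]. Then P(∃ j ∈ J' : I_j = 1 | ∃ j ∈ J : I_j = 1) ≥ |J'| / |J|. -/
import Mathlib

open Finset

/-- Product Bernoulli(p) measure on `{0,1}^ι`, where each coordinate equals
`true` (i.e. `1`) with probability `p`, independently. -/
noncomputable def muP {ι : Type*} [Fintype ι] (p : ℝ) (A : Finset (ι → Bool)) : ℝ :=
  ∑ η ∈ A, ∏ j : ι, if η j = true then p else 1 - p

open scoped Classical in
lemma muP_pi {ι : Type*} [Fintype ι] (p : ℝ) (t : ι → Finset Bool) :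
    muP p (Fintype.piFinset t) = ∏ j, ∑ b ∈ t j, (if b = true then p else 1 - p) := by
  rw [muP, Finset.prod_univ_sum]

open scoped Classical in
lemma muP_allfalse {ι : Type*} [Fintype ι] (p : ℝ) (S : Finset ι)
    [DecidablePred (fun η : ι → Bool => ∀ j ∈ S, η j = false)] :
    muP p (Finset.univ.filter (fun η : ι → Bool => ∀ j ∈ S, η j = false))
      = (1 - p) ^ S.card := by
  have hset : Finset.univ.filter (fun η : ι → Bool => ∀ j ∈ S, η j = false)
      = Fintype.piFinset (fun j => if j ∈ S then {false} else Finset.univ) := by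
    ext η
    simp only [Finset.mem_filter, Finset.mem_univ, true_and, Fintype.mem_piFinset]
    constructor
    · intro h j
      by_cases hj : j ∈ S
      · simp [hj, h j hj]
      · simp [hj]
    · intro h j hj
      have := h j
      simpa [hj] using this
  rw [hset, muP_pi]
  have : ∀ j : ι, (∑ b ∈ (if j ∈ S then ({false} : Finset Bool) else Finset.univ),
      (if b = true then p else 1 - p)) = if j ∈ S then (1 - p) else 1 := by
    intro j
    by_cases hj : j ∈ S
    · simp [hj]
    · simp [hj]
  rw [Finset.prod_congr rfl (fun j _ => this j), Finset.prod_ite_mem,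
    Finset.univ_inter, Finset.prod_const]

open scoped Classical in
lemma muP_univ {ι : Type*} [Fintype ι] (p : ℝ) : muP p (Finset.univ : Finset (ι → Bool)) = 1 := by
  have : (Finset.univ : Finset (ι → Bool)) = Fintype.piFinset (fun _ => Finset.univ) := by
    ext η; simp [Fintype.mem_piFinset]
  rw [this, muP_pi]
  have : ∀ j : ι, (∑ b ∈ (Finset.univ : Finset Bool), (if b = true then p else 1 - p)) = 1 := by
    intro j; simp
  simp [this]

open scoped Classical in
lemma muP_compl {ι : Type*} [Fintype ι] (p : ℝ) (P : (ι → Bool) → Prop)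
    [DecidablePred P] [DecidablePred (fun η => ¬ P η)] :
    muP p (Finset.univ.filter P) = 1 - muP p (Finset.univ.filter (fun η => ¬ P η)) := by
  have h := Finset.sum_filter_add_sum_filter_not (Finset.univ : Finset (ι → Bool)) P
    (fun η => ∏ j : ι, if η j = true then p else 1 - p)
  have hu := muP_univ (ι := ι) p
  simp only [muP] at *
  linarith

lemma key_ineq (q : ℝ) (hq0 : 0 ≤ q) (hq1 : q ≤ 1) {k n : ℕ} (hkn : k ≤ n) :
    (k : ℝ) * ∑ i ∈ Finset.range n, q ^ i ≤ (n : ℝ) * ∑ i ∈ Finset.range k, q ^ i := by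
  rw [← Finset.sum_range_add_sum_Ico _ hkn]
  have hT : ∑ i ∈ Finset.Ico k n, q ^ i ≤ ((n - k : ℕ) : ℝ) * q ^ k := by
    calc ∑ i ∈ Finset.Ico k n, q ^ i ≤ ∑ i ∈ Finset.Ico k n, q ^ k := by
          apply Finset.sum_le_sum
          intro i hi
          exact pow_le_pow_of_le_one hq0 hq1 (Finset.mem_Ico.mp hi).1
      _ = ((n - k : ℕ) : ℝ) * q ^ k := by rw [Finset.sum_const, Nat.card_Ico]; simp
  have hS : (k : ℝ) * q ^ k ≤ ∑ i ∈ Finset.range k, q ^ i := by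
    calc (k : ℝ) * q ^ k = ∑ _i ∈ Finset.range k, q ^ k := by simp [mul_comm]
      _ ≤ ∑ i ∈ Finset.range k, q ^ i := by
          apply Finset.sum_le_sum
          intro i hi
          exact pow_le_pow_of_le_one hq0 hq1 (le_of_lt (Finset.mem_range.mp hi))
  have hcast : ((n - k : ℕ) : ℝ) = (n : ℝ) - (k : ℝ) := Nat.cast_sub hkn
  have hk0 : (0:ℝ) ≤ k := Nat.cast_nonneg k
  have hnk : (0:ℝ) ≤ (n:ℝ) - k := by rw [← hcast]; exact Nat.cast_nonneg _
  rw [hcast] at hT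
  nlinarith [mul_le_mul_of_nonneg_left hT hk0, mul_le_mul_of_nonneg_left hS hnk]

open scoped Classical in
/-- For i.i.d. Bernoulli(p) variables `(I_j)_{j ∈ J}` with `p ∈ (0,1]` and `J' ⊆ J`,
`P(∃ j ∈ J', I_j = 1 | ∃ j ∈ J, I_j = 1) ≥ |J'|/|J|`. -/
theorem uniform_success {ι : Type*} [Fintype ι] [Nonempty ι]
    (p : ℝ) (hp0 : 0 < p) (hp1 : p ≤ 1) (J' : Finset ι) :
    (J'.card : ℝ) / (Fintype.card ι) ≤
      muP p (Finset.univ.filter (fun η : ι → Bool =>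
          (∃ j ∈ J', η j = true) ∧ ∃ j : ι, η j = true)) /
        muP p (Finset.univ.filter (fun η : ι → Bool => ∃ j : ι, η j = true)) := by
  set q : ℝ := 1 - p with hq
  have hq0 : 0 ≤ q := by linarith
  have hq1 : q < 1 := by linarith
  set n := Fintype.card ι with hn
  set k := J'.card with hk
  have hn1 : 1 ≤ n := Fintype.card_pos
  have hkn : k ≤ n := Finset.card_le_univ J' |>.trans_eq (by simp [hn])
  -- simplify the numerator event
  have hev : Finset.univ.filter (fun η : ι → Bool =>
        (∃ j ∈ J', η j = true) ∧ ∃ j : ι, η j = true)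
      = Finset.univ.filter (fun η : ι → Bool => ∃ j ∈ J', η j = true) := by
    apply Finset.filter_congr
    intro η _
    constructor
    · exact fun h => h.1
    · rintro ⟨j, hj, hjt⟩
      exact ⟨⟨j, hj, hjt⟩, ⟨j, hjt⟩⟩
  have hnum : muP p (Finset.univ.filter (fun η : ι → Bool =>
        (∃ j ∈ J', η j = true) ∧ ∃ j : ι, η j = true)) = 1 - q ^ k := by
    rw [hev, muP_compl p (fun η => ∃ j ∈ J', η j = true)]
    have : (Finset.univ.filter (fun η : ι → Bool => ¬ ∃ j ∈ J', η j = true))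
        = Finset.univ.filter (fun η : ι → Bool => ∀ j ∈ J', η j = false) := by
      apply Finset.filter_congr
      intro η _
      push_neg
      simp
    rw [this, muP_allfalse]
  have hden : muP p (Finset.univ.filter (fun η : ι → Bool => ∃ j : ι, η j = true))
      = 1 - q ^ n := by
    rw [muP_compl p (fun η => ∃ j : ι, η j = true)]
    have : (Finset.univ.filter (fun η : ι → Bool => ¬ ∃ j : ι, η j = true))
        = Finset.univ.filter (fun η : ι → Bool => ∀ j ∈ (Finset.univ : Finset ι), η j = false) := by
      apply Finset.filter_congr
      intro η _
      push_neg
      simp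
    rw [this, muP_allfalse, Finset.card_univ]
  rw [hnum, hden]
  have hqn : q ^ n < 1 := pow_lt_one₀ hq0 hq1 (by omega)
  have hdenpos : (0:ℝ) < 1 - q ^ n := by linarith
  have hnpos : (0:ℝ) < n := by exact_mod_cast hn1
  rw [div_le_div_iff₀ hnpos hdenpos]
  have hgeom : ∀ m : ℕ, 1 - q ^ m = (1 - q) * ∑ i ∈ Finset.range m, q ^ i := by
    intro m
    have := geom_sum_mul q m
    linarith [this]
  rw [hgeom k, hgeom n]
  have hkey := key_ineq q hq0 (le_of_lt hq1) hkn
  nlinarith [hkey, hp0]
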